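/- Let β, γ ∈ Z_2^×. Then the ternary quadratic form x^2 - y^2 - 2βγ z^2 over Z_2 primitively represents every element of Z_2 \ 4Z_2^×: every t ∈ Z_2 with t not of the form 4δ for a unit δ admits a representation t = x^2 - y^2 - 2βγ z^2 with (x,y,z) a primitive vector over Z_2. -/

import Mathlib

/-! Split `t` by its `2`-adic valuation. An odd `t = 2a + 1` is `(a + 1)² - a²`; for `t = 2s` with
`s` odd, `s + βγ = 2δ` is even and `t = (1 + δ)² - (1 - δ)² - 2βγ`; and `t = 8k` is
`(2k + 1)² - (2k - 1)²`. Since `t ∉ 4ℤ₂^×`, these cases are exhaustive. -/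

namespace PadicInt

variable {p : ℕ} [Fact p.Prime]

theorem p_dvd_iff_not_isUnit (x : ℤ_[p]) : (p : ℤ_[p]) ∣ x ↔ ¬IsUnit x := by
  rw [not_isUnit_iff, norm_lt_one_iff_dvd]

theorem even_or_odd (x : ℤ_[2]) : Even x ∨ Odd x := by
  obtain ⟨n, hn, hx⟩ := exists_mem_range (p := 2) x
  rw [maximalIdeal_eq_span_p, Ideal.mem_span_singleton] at hx
  interval_cases n
  · left
    simpa [even_iff_two_dvd] using hx
  · right
    obtain ⟨k, hk⟩ := hx
    exact ⟨k, by push_cast at hk; linear_combination hk⟩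

theorem two_dvd_iff_not_isUnit (x : ℤ_[2]) : 2 ∣ x ↔ ¬IsUnit x := by
  exact_mod_cast p_dvd_iff_not_isUnit x

theorem odd_iff_isUnit (x : ℤ_[2]) : Odd x ↔ IsUnit x := by
  constructor
  · rintro ⟨k, rfl⟩
    by_contra hx
    have h1 : (2 : ℤ_[2]) ∣ 1 := by
      simpa using ((two_dvd_iff_not_isUnit _).2 hx).sub (dvd_mul_right 2 k)
    exact (two_dvd_iff_not_isUnit 1).1 h1 isUnit_one
  · intro hx
    refine (even_or_odd x).resolve_left fun he => ?_
    exact (two_dvd_iff_not_isUnit x).1 (even_iff_two_dvd.1 he) hx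

theorem not_two_dvd_of_odd {x : ℤ_[2]} (hx : Odd x) : ¬(2 : ℤ_[2]) ∣ x := fun h =>
  (two_dvd_iff_not_isUnit x).1 h ((odd_iff_isUnit x).1 hx)

end PadicInt

open PadicInt

def PrimitivelyRepresents (β γ t : ℤ_[2]) : Prop :=
  ∃ x y z : ℤ_[2], ¬((2 : ℤ_[2]) ∣ x ∧ (2 : ℤ_[2]) ∣ y ∧ (2 : ℤ_[2]) ∣ z) ∧
    t = x ^ 2 - y ^ 2 - 2 * β * γ * z ^ 2

theorem primitivelyRepresents_of_odd (β γ : ℤ_[2]) {t : ℤ_[2]} (ht : Odd t) :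
    PrimitivelyRepresents β γ t := by
  obtain ⟨a, rfl⟩ := ht
  refine ⟨a + 1, a, 0, fun ⟨hx, hy, _⟩ => not_two_dvd_of_odd odd_one ?_, by ring⟩
  simpa using hx.sub hy

theorem primitivelyRepresents_two_mul_of_odd {β γ s : ℤ_[2]} (hβγ : Odd (β * γ))
    (hs : Odd s) : PrimitivelyRepresents β γ (2 * s) := by
  obtain ⟨δ, hδ⟩ := even_iff_two_dvd.1 (hs.add_odd hβγ)
  exact ⟨1 + δ, 1 - δ, 1, fun ⟨_, _, hz⟩ => not_two_dvd_of_odd odd_one hz,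
    by linear_combination 2 * hδ⟩

theorem primitivelyRepresents_eight_mul (β γ k : ℤ_[2]) :
    PrimitivelyRepresents β γ (8 * k) :=
  ⟨2 * k + 1, 2 * k - 1, 0,
    fun ⟨hx, _, _⟩ => not_two_dvd_of_odd (odd_two_mul_add_one k) hx, by ring⟩

/-- For `2`-adic units `β, γ`, the form `x² - y² - 2βγ z²` primitively represents
every element of `ℤ₂` not of the form `4δ` with `δ` a unit. -/
theorem primitive_rep_outside_four_units (β γ : ℤ_[2]) (hβ : IsUnit β) (hγ : IsUnit γ)
    (t : ℤ_[2]) (ht : ¬ ∃ δ : ℤ_[2], IsUnit δ ∧ t = 4 * δ) :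
    ∃ x y z : ℤ_[2], ¬ ((2 : ℤ_[2]) ∣ x ∧ (2 : ℤ_[2]) ∣ y ∧ (2 : ℤ_[2]) ∣ z) ∧
      t = x ^ 2 - y ^ 2 - 2 * β * γ * z ^ 2 := by
  show PrimitivelyRepresents β γ t
  rcases even_or_odd t with ht_even | ht_odd
  · obtain ⟨s, rfl⟩ := even_iff_two_dvd.1 ht_even
    rcases even_or_odd s with hs_even | hs_odd
    · obtain ⟨m, rfl⟩ := even_iff_two_dvd.1 hs_even
      have hm : Even m := (even_or_odd m).resolve_right fun hm =>
        ht ⟨m, (odd_iff_isUnit m).1 hm, by ring⟩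
      obtain ⟨k, rfl⟩ := even_iff_two_dvd.1 hm
      rw [show (2 : ℤ_[2]) * (2 * (2 * k)) = 8 * k by ring]
      exact primitivelyRepresents_eight_mul β γ k
    · exact primitivelyRepresents_two_mul_of_odd ((odd_iff_isUnit _).2 (hβ.mul hγ)) hs_odd
  · exact primitivelyRepresents_of_odd β γ ht_odd
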